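/- Fix real parameters α, γ, δ, ε > 0, let β₁ be the unique solution of g = 1 on (1/ε, ∞) and β_c > β₁ the unique solution of F = 1 on (β₁, ∞). For each β ∈ (β₁, β_c), since λ(P₃₄(β),β) = F(β) > 1 and Z ↦ λ(Z,β) is continuous, strictly decreasing and tends to 0, there is a unique P(β) > P₃₄(β) with λ(P(β),β) = 1. Then P(β) tends to P₃₄(β_c) as β tends to β_c from the left. (Lemma 3 of the paper: lim_{β→β_c⁻} P(β) = P₃₄(β_c), i.e. the pressure meets P₃₄ continuously at the phase transition.) -/

import Mathlib

open Filter

/-- `P₃₄(β) = γβ + log(1 + e^{δβ})`. -/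
noncomputable def P34 (γ δ β : ℝ) : ℝ := γ * β + Real.log (1 + Real.exp (δ * β))

/-- `Σ₁(Z,β) = ∑_{n=1}^∞ e^{-n(αβ+Z)}` (indexed by `n : ℕ` via `n ↦ n+1`). -/
noncomputable def S1 (α β Z : ℝ) : ℝ := ∑' n : ℕ, Real.exp (-((n : ℝ) + 1) * (α * β + Z))

/-- `Σ₂(Z,β) = ∑_{n=1}^∞ (n+1)^{-β} e^{-nZ}`. -/
noncomputable def S2 (β Z : ℝ) : ℝ :=
  ∑' n : ℕ, ((n : ℝ) + 2) ^ (-β) * Real.exp (-((n : ℝ) + 1) * Z)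

/-- `Σ₃(Z,β) = (1+e^{δβ})^{-2} ∑_{n=1}^∞ (n+1)^{-εβ} e^{n(P₃₄(β)-Z)}`. -/
noncomputable def S3 (γ δ ε β Z : ℝ) : ℝ :=
  (∑' n : ℕ, ((n : ℝ) + 2) ^ (-(ε * β)) * Real.exp (((n : ℝ) + 1) * (P34 γ δ β - Z))) /
    (1 + Real.exp (δ * β)) ^ 2

/-- `g(β) = Σ₂(P₃₄(β),β)·Σ₃(P₃₄(β),β)`. -/
noncomputable def g (γ δ ε β : ℝ) : ℝ := S2 β (P34 γ δ β) * S3 γ δ ε β (P34 γ δ β)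

/-- `λ(Z,β) = Σ₁(Z,β) + Σ₂(Z,β)·e^{-αβ-Z}/(1 - Σ₂(Z,β)·Σ₃(Z,β))`. -/
noncomputable def lam (α γ δ ε β Z : ℝ) : ℝ :=
  S1 α β Z + S2 β Z * Real.exp (-(α * β) - Z) / (1 - S2 β Z * S3 γ δ ε β Z)

/-- `F(β) = λ(P₃₄(β),β)`. -/
noncomputable def F (α γ δ ε β : ℝ) : ℝ := lam α γ δ ε β (P34 γ δ β)

/-!
The lower bound is immediate: `P(β) > P₃₄(β) → P₃₄(β_c)`. For the upper bound, `F(β_c) = 1`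
together with `Σ₁ < 1` at `(P₃₄(β_c), β_c)` forces `g(β_c) = Σ₂Σ₃ < 1`, so `λ(·, β_c)` is strictly
decreasing on `[P₃₄(β_c), ∞)`. Fix `Z > P₃₄(β_c)`: then `λ(Z, β_c) < 1` and `1 - Σ₂Σ₃ > 0` at
`(Z, β_c)`. Both quantities are continuous in `β` at fixed `Z` (the series converge uniformly
there), so for `β` near `β_c` we still have `λ(Z, β) < 1` and a positive denominator, hence
`λ(·, β) < 1` on `[Z, ∞)` and `P(β) ≤ Z`.
-/

open Real Topology

section

variable {α γ δ ε β Z Z₁ Z₂ : ℝ}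

lemma continuous_P34 (γ δ : ℝ) : Continuous (P34 γ δ) :=
  (continuous_const.mul continuous_id).add
    ((by fun_prop : Continuous fun β : ℝ => 1 + exp (δ * β)).log fun β => by positivity)

lemma P34_pos (hγ : 0 ≤ γ) (hβ : 0 ≤ β) : 0 < P34 γ δ β := by
  have : 0 < log (1 + exp (δ * β)) := log_pos (by linarith [exp_pos (δ * β)])
  unfold P34
  nlinarith

lemma log_two_lt_P34 (hγ : 0 ≤ γ) (hβ : 0 ≤ β) (hδβ : 0 < δ * β) : log 2 < P34 γ δ β := by
  have : log 2 < log (1 + exp (δ * β)) := log_lt_log two_pos (by linarith [one_lt_exp_iff.2 hδβ])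
  unfold P34
  nlinarith

lemma S1_eq_inv (h : 0 < α * β + Z) : S1 α β Z = (exp (α * β + Z) - 1)⁻¹ := by
  have hr : exp (-(α * β + Z)) < 1 := exp_lt_one_iff.2 (by linarith)
  have hterm : ∀ n : ℕ, exp (-((n : ℝ) + 1) * (α * β + Z))
      = exp (-(α * β + Z)) * exp (-(α * β + Z)) ^ n := fun n => by
    rw [← exp_nat_mul, ← exp_add]; ring_nf
  rw [S1, tsum_congr hterm, tsum_mul_left, tsum_geometric_of_lt_one (exp_pos _).le hr, exp_neg]
  field_simp

lemma S1_lt_of_lt (h : 0 < α * β + Z₁) (h12 : Z₁ < Z₂) : S1 α β Z₂ < S1 α β Z₁ := by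
  rw [S1_eq_inv h, S1_eq_inv (by linarith)]
  exact inv_strictAnti₀ (by linarith [one_lt_exp_iff.2 h]) (by gcongr)

lemma S1_lt_one (h : log 2 < α * β + Z) : S1 α β Z < 1 := by
  have h2 : 2 < exp (α * β + Z) := by simpa [exp_log two_pos] using exp_lt_exp.2 h
  rw [S1_eq_inv ((log_pos one_lt_two).trans h)]
  exact inv_lt_one_of_one_lt₀ (by linarith)

lemma S2_nonneg (β Z : ℝ) : 0 ≤ S2 β Z := tsum_nonneg fun _ => by positivity

lemma S3_nonneg (γ δ ε β Z : ℝ) : 0 ≤ S3 γ δ ε β Z :=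
  div_nonneg (tsum_nonneg fun _ => by positivity) (by positivity)

lemma summable_exp_mul_succ {c : ℝ} (hc : c < 0) :
    Summable fun n : ℕ => exp (c * ((n : ℝ) + 1)) :=
  summable_exp_nat_mul_of_ge hc fun _ => by linarith

lemma rpow_neg_mul_exp_le {n : ℕ} {s : ℝ} (hs : 0 ≤ s) (t : ℝ) :
    ((n : ℝ) + 2) ^ (-s) * exp t ≤ exp t :=
  mul_le_of_le_one_left (exp_pos t).le
    (rpow_le_one_of_one_le_of_nonpos (by linarith [n.cast_nonneg (α := ℝ)]) (by linarith))

lemma summable_S2 (hβ : 0 ≤ β) (hZ : 0 < Z) :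
    Summable fun n : ℕ => ((n : ℝ) + 2) ^ (-β) * exp (-((n : ℝ) + 1) * Z) := by
  refine (summable_exp_mul_succ (neg_lt_zero.2 hZ)).of_nonneg_of_le (fun _ => by positivity)
    fun n => (rpow_neg_mul_exp_le hβ _).trans_eq ?_
  ring_nf

lemma summable_S3_of_P34_lt (hεβ : 0 ≤ ε * β) (hZ : P34 γ δ β < Z) :
    Summable fun n : ℕ =>
      ((n : ℝ) + 2) ^ (-(ε * β)) * exp (((n : ℝ) + 1) * (P34 γ δ β - Z)) := by
  refine (summable_exp_mul_succ (sub_neg.2 hZ)).of_nonneg_of_le (fun _ => by positivity)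
    fun n => (rpow_neg_mul_exp_le hεβ _).trans_eq ?_
  ring_nf

lemma summable_S3_P34 (hεβ : 1 < ε * β) :
    Summable fun n : ℕ =>
      ((n : ℝ) + 2) ^ (-(ε * β)) * exp (((n : ℝ) + 1) * (P34 γ δ β - P34 γ δ β)) := by
  simpa using (summable_nat_add_iff 2).2 (summable_nat_rpow.2 (neg_lt_neg hεβ))

lemma S2_le_of_le (hβ : 0 ≤ β) (hZ₁ : 0 < Z₁) (h12 : Z₁ ≤ Z₂) : S2 β Z₂ ≤ S2 β Z₁ :=
  (summable_S2 hβ (hZ₁.trans_le h12)).tsum_le_tsum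
    (fun n => mul_le_mul_of_nonneg_left (exp_le_exp.2 (by nlinarith [n.cast_nonneg (α := ℝ)]))
      (by positivity))
    (summable_S2 hβ hZ₁)

lemma S3_le_of_le
    (hsum : Summable fun n : ℕ =>
      ((n : ℝ) + 2) ^ (-(ε * β)) * exp (((n : ℝ) + 1) * (P34 γ δ β - Z₁)))
    (h12 : Z₁ ≤ Z₂) : S3 γ δ ε β Z₂ ≤ S3 γ δ ε β Z₁ := by
  have hle : ∀ n : ℕ, ((n : ℝ) + 2) ^ (-(ε * β)) * exp (((n : ℝ) + 1) * (P34 γ δ β - Z₂))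
      ≤ ((n : ℝ) + 2) ^ (-(ε * β)) * exp (((n : ℝ) + 1) * (P34 γ δ β - Z₁)) := fun n => by
    gcongr
  unfold S3
  gcongr ?_ / _
  exact (hsum.of_nonneg_of_le (fun _ => by positivity) hle).tsum_le_tsum hle hsum

lemma S2_mul_S3_le_of_le (hβ : 0 ≤ β) (hZ₁ : 0 < Z₁)
    (hsum : Summable fun n : ℕ =>
      ((n : ℝ) + 2) ^ (-(ε * β)) * exp (((n : ℝ) + 1) * (P34 γ δ β - Z₁)))
    (h12 : Z₁ ≤ Z₂) : S2 β Z₂ * S3 γ δ ε β Z₂ ≤ S2 β Z₁ * S3 γ δ ε β Z₁ :=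
  mul_le_mul (S2_le_of_le hβ hZ₁ h12) (S3_le_of_le hsum h12) (S3_nonneg ..) (S2_nonneg ..)

lemma lam_lt_of_lt (hβ : 0 ≤ β) (hαβ : 0 < α * β + Z₁) (hZ₁ : 0 < Z₁)
    (hsum : Summable fun n : ℕ =>
      ((n : ℝ) + 2) ^ (-(ε * β)) * exp (((n : ℝ) + 1) * (P34 γ δ β - Z₁)))
    (hD : 0 < 1 - S2 β Z₁ * S3 γ δ ε β Z₁) (h12 : Z₁ < Z₂) :
    lam α γ δ ε β Z₂ < lam α γ δ ε β Z₁ := by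
  have hS2 := S2_le_of_le hβ hZ₁ h12.le
  have hprod := S2_mul_S3_le_of_le hβ hZ₁ hsum h12.le
  have hS2₁ := S2_nonneg β Z₁
  have hexp : exp (-(α * β) - Z₂) ≤ exp (-(α * β) - Z₁) := exp_le_exp.2 (by linarith)
  rw [lam, lam]
  exact add_lt_add_of_lt_of_le (S1_lt_of_lt hαβ h12)
    (div_le_div₀ (by positivity) (mul_le_mul hS2 hexp (exp_pos _).le hS2₁) hD
      (sub_le_sub_left hprod 1))

lemma g_lt_one_of_F_eq_one (hα : 0 ≤ α) (hγ : 0 ≤ γ) (hβ : 0 ≤ β) (hδβ : 0 < δ * β)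
    (hF : F α γ δ ε β = 1) : g γ δ ε β < 1 := by
  have hS1 : S1 α β (P34 γ δ β) < 1 := S1_lt_one (by nlinarith [log_two_lt_P34 hγ hβ hδβ])
  by_contra! hg
  have hfrac : S2 β (P34 γ δ β) * exp (-(α * β) - P34 γ δ β) / (1 - g γ δ ε β) ≤ 0 :=
    div_nonpos_of_nonneg_of_nonpos (by positivity [S2_nonneg β (P34 γ δ β)]) (by linarith)
  rw [F, lam] at hF
  rw [g] at hfrac
  linarith

lemma continuousAt_S1 (h : 0 < α * β + Z) : ContinuousAt (fun b => S1 α b Z) β := by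
  have hcf : ContinuousAt (fun b => (exp (α * b + Z) - 1)⁻¹) β :=
    (by fun_prop : Continuous fun b => exp (α * b + Z) - 1).continuousAt.inv₀
      (sub_pos.2 (one_lt_exp_iff.2 h)).ne'
  refine hcf.congr ?_
  filter_upwards [((by fun_prop : Continuous fun b => α * b + Z).tendsto β).eventually
    (lt_mem_nhds h)] with b hb
  exact (S1_eq_inv hb).symm

lemma continuousOn_S2 (hZ : 0 < Z) : ContinuousOn (fun b => S2 b Z) (Set.Ici 0) := by
  refine continuousOn_tsum (fun n => Continuous.continuousOn ?_)
    (summable_exp_mul_succ (neg_lt_zero.2 hZ)) fun n b hb => ?_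
  · exact (continuous_const.rpow continuous_neg fun _ => Or.inl (by positivity)).mul
      continuous_const
  · rw [norm_of_nonneg (by positivity)]
    exact (rpow_neg_mul_exp_le hb _).trans_eq (by ring_nf)

lemma continuousAt_S2 (hβ : 0 < β) (hZ : 0 < Z) : ContinuousAt (fun b => S2 b Z) β :=
  (continuousOn_S2 hZ).continuousAt (Ici_mem_nhds hβ)

lemma continuousAt_S3 (hεβ : 0 < ε * β) (hZ : P34 γ δ β < Z) :
    ContinuousAt (fun b => S3 γ δ ε b Z) β := by
  obtain ⟨c, hβc, hcZ⟩ := exists_between hZ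
  have hsum : ContinuousOn
      (fun b => ∑' n : ℕ, ((n : ℝ) + 2) ^ (-(ε * b)) * exp (((n : ℝ) + 1) * (P34 γ δ b - Z)))
      {b | 0 ≤ ε * b ∧ P34 γ δ b ≤ c} := by
    refine continuousOn_tsum (fun n => Continuous.continuousOn ?_)
      (summable_exp_mul_succ (sub_neg.2 hcZ)) fun n b hb => ?_
    · exact (continuous_const.rpow (by fun_prop) fun _ => Or.inl (by positivity)).mul
        (continuous_exp.comp (continuous_const.mul ((continuous_P34 γ δ).sub continuous_const)))
    · rw [norm_of_nonneg (by positivity)]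
      exact (rpow_neg_mul_exp_le hb.1 _).trans
        (exp_le_exp.2 (by nlinarith [hb.2, n.cast_nonneg (α := ℝ)]))
  have hmem : {b | 0 ≤ ε * b ∧ P34 γ δ b ≤ c} ∈ 𝓝 β :=
    ((((continuous_const.mul continuous_id).tendsto β).eventually (lt_mem_nhds hεβ)).and
      (((continuous_P34 γ δ).tendsto β).eventually (gt_mem_nhds hβc))).mono
      fun b hb => ⟨hb.1.le, hb.2.le⟩
  unfold S3
  exact (hsum.continuousAt hmem).div (by fun_prop) (by positivity)

lemma continuousAt_S2_mul_S3 (hβ : 0 < β) (hZ₀ : 0 < Z) (hεβ : 0 < ε * β)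
    (hZ : P34 γ δ β < Z) : ContinuousAt (fun b => S2 b Z * S3 γ δ ε b Z) β :=
  (continuousAt_S2 hβ hZ₀).mul (continuousAt_S3 hεβ hZ)

lemma continuousAt_lam (hβ : 0 < β) (hαβ : 0 < α * β + Z) (hZ₀ : 0 < Z) (hεβ : 0 < ε * β)
    (hZ : P34 γ δ β < Z) (hD : 1 - S2 β Z * S3 γ δ ε β Z ≠ 0) :
    ContinuousAt (fun b => lam α γ δ ε b Z) β :=
  (continuousAt_S1 hαβ).add (((continuousAt_S2 hβ hZ₀).mul (by fun_prop)).div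
    (continuousAt_const.sub (continuousAt_S2_mul_S3 hβ hZ₀ hεβ hZ)) hD)

lemma eventually_lam_lt_F (hα : 0 ≤ α) (hγ : 0 ≤ γ) (hβ : 0 < β) (hεβ : 1 < ε * β)
    (hg : g γ δ ε β < 1) (hZ : P34 γ δ β < Z) :
    ∀ᶠ b in 𝓝 β, ∀ Z' > Z, lam α γ δ ε b Z' < F α γ δ ε β := by
  have hε : 0 < ε := pos_of_mul_pos_left (one_pos.trans hεβ) hβ.le
  have hP34 : 0 < P34 γ δ β := P34_pos hγ hβ.le
  have hZ₀ : 0 < Z := hP34.trans hZ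
  have hsum := summable_S3_P34 (γ := γ) (δ := δ) hεβ
  have hDP34 : 0 < 1 - S2 β (P34 γ δ β) * S3 γ δ ε β (P34 γ δ β) := sub_pos.2 hg
  have hlam : lam α γ δ ε β Z < F α γ δ ε β :=
    lam_lt_of_lt hβ.le (by positivity) hP34 hsum hDP34 hZ
  have hD : S2 β Z * S3 γ δ ε β Z < 1 :=
    (S2_mul_S3_le_of_le hβ.le hP34 hsum hZ.le).trans_lt hg
  filter_upwards [(continuousAt_lam hβ (by positivity) hZ₀ (by positivity) hZ
      (sub_pos.2 hD).ne').eventually (gt_mem_nhds hlam),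
    (continuousAt_S2_mul_S3 hβ hZ₀ (by positivity) hZ).eventually (gt_mem_nhds hD),
    ((continuous_P34 γ δ).tendsto β).eventually (gt_mem_nhds hZ), lt_mem_nhds hβ]
    with b hlamb hDb hPb hb Z' hZ'
  exact (lam_lt_of_lt hb.le (by positivity) hZ₀ (summable_S3_of_P34_lt (by positivity) hPb)
    (sub_pos.2 hDb) hZ').trans hlamb

end

theorem stmt_9_general (α γ δ ε : ℝ) (hα : 0 < α) (hγ : 0 < γ) (hδ : 0 < δ) (hε : 0 < ε)
    (β₁ : ℝ) (hβ₁ : 1 / ε < β₁)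
    (βc : ℝ) (hβc : β₁ < βc) (hFβc : F α γ δ ε βc = 1)
    (P : ℝ → ℝ)
    (hP : ∀ β ∈ Set.Ioo β₁ βc, P34 γ δ β < P β ∧ lam α γ δ ε β (P β) = 1) :
    Tendsto P (nhdsWithin βc (Set.Ioo β₁ βc)) (nhds (P34 γ δ βc)) := by
  have hβc₀ : 0 < βc := (one_div_pos.2 hε).trans (hβ₁.trans hβc)
  have hεβc : 1 < ε * βc := by
    rw [mul_comm]; exact (div_lt_iff₀ hε).1 (hβ₁.trans hβc)
  have hg : g γ δ ε βc < 1 := g_lt_one_of_F_eq_one hα.le hγ.le hβc₀.le (by positivity) hFβc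
  refine tendsto_order.2 ⟨fun a ha => ?_, fun a ha => ?_⟩
  · filter_upwards [nhdsWithin_le_nhds
      (((continuous_P34 γ δ).tendsto βc).eventually (lt_mem_nhds ha)), self_mem_nhdsWithin]
      with β hβ hmem
    exact hβ.trans (hP β hmem).1
  · obtain ⟨Z, hZ, hZa⟩ := exists_between ha
    filter_upwards [nhdsWithin_le_nhds (eventually_lam_lt_F hα.le hγ.le hβc₀ hεβc hg hZ),
      self_mem_nhdsWithin] with β hβ hmem
    refine (not_lt.1 fun hPZ => ?_).trans_lt hZa
    exact (hβ _ hPZ).ne ((hP β hmem).2.trans hFβc.symm)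

/-- Lemma 3: with `β₁` the unique solution of `g = 1` on `(1/ε,∞)`, `β_c > β₁` the unique
solution of `F = 1` on `(β₁,∞)`, and `P : (β₁,β_c) → ℝ` the pressure, defined by
`P(β) > P₃₄(β)` and `λ(P(β),β) = 1`, we have `P(β) → P₃₄(β_c)` as `β → β_c⁻`. -/
theorem stmt_9 (α γ δ ε : ℝ) (hα : 0 < α) (hγ : 0 < γ) (hδ : 0 < δ) (hε : 0 < ε)
    (β₁ : ℝ) (hβ₁ : 1 / ε < β₁) (hgβ₁ : g γ δ ε β₁ = 1)
    (hβ₁uniq : ∀ b, 1 / ε < b → g γ δ ε b = 1 → b = β₁)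
    (βc : ℝ) (hβc : β₁ < βc) (hFβc : F α γ δ ε βc = 1)
    (hβcuniq : ∀ b, β₁ < b → F α γ δ ε b = 1 → b = βc)
    (P : ℝ → ℝ)
    (hP : ∀ β ∈ Set.Ioo β₁ βc, P34 γ δ β < P β ∧ lam α γ δ ε β (P β) = 1) :
    Tendsto P (nhdsWithin βc (Set.Ioo β₁ βc)) (nhds (P34 γ δ βc)) :=
  stmt_9_general α γ δ ε hα hγ hδ hε β₁ hβ₁ βc hβc hFβc P hP
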